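/- Let I ⊆ ℝ be open, Π : I → ℝ^m sufficiently differentiable, S an m×m real matrix with Sᵀ = (−1)^{l+1} S for some integer l ≥ 1, and suppose Π(t)ᵀ S Π^{(j)}(t) = 0 for all 0 ≤ j ≤ l−2 and t ∈ I. Define C(t) = Π(t)ᵀ S Π^{(l−1)}(t). Suppose moreover that Π satisfies the vector ODE Σ_{i=0}^{l} b_i(t) Π^{(i)}(t) = 0 componentwise, for functions b_i : I → ℝ. Then: (a) Π(t)ᵀ S Π^{(l)}(t) = (l/2)·C'(t), and (b) b_{l−1}(t) C(t) + (l/2) b_l(t) C'(t) = 0 for all t ∈ I. -/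

import Mathlib

open Matrix

/-!
Write `Q j k = Π^{(j)ᵀ} S Π^{(k)}`. By the Leibniz rule `(Q j k)' = Q (j+1) k + Q j (k+1)`, so
differentiating the vanishing relations `Q 0 k = 0` (`k < l - 1`) spreads them to all `Q j k`
with `j + k < l - 1`; differentiating once more gives `Q j k = (-1)^j C` on the antidiagonal
`j + k = l - 1`, and once more `Q j k = (-1)^j (Q 0 l - j C')` on `j + k = l`. The symmetry
`Q l 0 = (-1)^(l+1) Q 0 l` of `S` then forces `2 Q 0 l = l C'`, which is (a). Pairing the ODE
with `Π` kills all terms but the last two, and (a) turns them into (b).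
-/

theorem ContDiffAt.hasDerivAt_iteratedDeriv {𝕜 F : Type*} [NontriviallyNormedField 𝕜]
    [NormedAddCommGroup F] [NormedSpace 𝕜 F] {f : 𝕜 → F} {n : WithTop ℕ∞} {x : 𝕜}
    (hf : ContDiffAt 𝕜 n f x) {j : ℕ} (hj : (j : WithTop ℕ∞) < n) :
    HasDerivAt (iteratedDeriv j f) (iteratedDeriv (j + 1) f x) x := by
  have hdiff : DifferentiableAt 𝕜 (iteratedDeriv j f) x := by
    have hF := hf.differentiableAt_iteratedFDeriv hj
    unfold iteratedDeriv
    fun_prop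
  rw [iteratedDeriv_succ]
  exact hdiff.hasDerivAt

section LeibnizTable

open Set

/-- Satisfied by `Q j k = B (Π^{(j)}, Π^{(k)})` for bilinear `B` and `Π` of class `C^(n+1)`. -/
def IsLeibnizTableOn (Q : ℕ → ℕ → ℝ → ℝ) (n : ℕ) (I : Set ℝ) : Prop :=
  ∀ j k, j + k ≤ n → ∀ t ∈ I, HasDerivAt (Q j k) (Q (j + 1) k t + Q j (k + 1) t) t

variable {Q : ℕ → ℕ → ℝ → ℝ} {n : ℕ} {I : Set ℝ}

theorem IsLeibnizTableOn.add_eq_deriv (hQ : IsLeibnizTableOn Q n I) (hI : IsOpen I)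
    {j k : ℕ} (hjk : j + k ≤ n) {g : ℝ → ℝ} (hg : EqOn (Q j k) g I) {t : ℝ} (ht : t ∈ I) :
    Q (j + 1) k t + Q j (k + 1) t = deriv g t :=
  ((hQ j k hjk t ht).congr_of_eventuallyEq
    (hg.eventuallyEq_of_mem (hI.mem_nhds ht)).symm).deriv.symm

theorem IsLeibnizTableOn.eqOn_zero (hQ : IsLeibnizTableOn Q n I) (hI : IsOpen I)
    (h0 : ∀ k < n, EqOn (Q 0 k) 0 I) : ∀ j k, j + k < n → EqOn (Q j k) 0 I := by
  intro j
  induction j with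
  | zero => exact fun k hk => h0 k (by omega)
  | succ j ih =>
    intro k hjk t ht
    have hderiv := hQ.add_eq_deriv hI (by omega) (ih k (by omega)) ht
    have hnext := ih (k + 1) (by omega) ht
    simp only [Pi.zero_apply, deriv_zero] at hderiv hnext ⊢
    linarith

theorem IsLeibnizTableOn.eqOn_antidiagonal (hQ : IsLeibnizTableOn Q n I) (hI : IsOpen I)
    (h0 : ∀ k < n, EqOn (Q 0 k) 0 I) :
    ∀ j k, j + k = n → EqOn (Q j k) (fun t => (-1) ^ j * Q 0 n t) I := by
  intro j
  induction j with
  | zero => rintro k rfl t -; simp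
  | succ j ih =>
    intro k hjk t ht
    have hderiv := hQ.add_eq_deriv hI (by omega) (hQ.eqOn_zero hI h0 j k (by omega)) ht
    have hnext := ih (k + 1) (by omega) ht
    simp only [Pi.zero_apply, deriv_zero] at hderiv hnext ⊢
    linear_combination hderiv - hnext

theorem IsLeibnizTableOn.eqOn_diagonal (hQ : IsLeibnizTableOn Q n I) (hI : IsOpen I)
    (h0 : ∀ k < n, EqOn (Q 0 k) 0 I) :
    ∀ j k, j + k = n + 1 →
      EqOn (Q j k) (fun t => (-1) ^ j * (Q 0 (n + 1) t - j * deriv (Q 0 n) t)) I := by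
  intro j
  induction j with
  | zero =>
    intro k hk
    obtain rfl : k = n + 1 := by omega
    intro t _
    simp
  | succ j ih =>
    intro k hjk t ht
    have hderiv := hQ.add_eq_deriv hI (by omega) (hQ.eqOn_antidiagonal hI h0 j k (by omega)) ht
    have hnext := ih (k + 1) (by omega) ht
    rw [deriv_const_mul_field'] at hderiv
    simp only at hnext ⊢
    push_cast
    linear_combination hderiv - hnext

theorem IsLeibnizTableOn.eqOn_zero_succ (hQ : IsLeibnizTableOn Q n I) (hI : IsOpen I)
    (h0 : ∀ k < n, EqOn (Q 0 k) 0 I)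
    (hsymm : ∀ t ∈ I, Q (n + 1) 0 t = (-1) ^ (n + 2) * Q 0 (n + 1) t) :
    EqOn (Q 0 (n + 1)) (fun t => ((n + 1 : ℝ) / 2) * deriv (Q 0 n) t) I := by
  intro t ht
  have hdiag := hQ.eqOn_diagonal hI h0 (n + 1) 0 rfl ht
  rw [hsymm t ht, pow_succ _ (n + 1)] at hdiag
  push_cast at hdiag
  have hcancel : -Q 0 (n + 1) t = Q 0 (n + 1) t - (n + 1) * deriv (Q 0 n) t :=
    mul_left_cancel₀ (pow_ne_zero (n + 1) (neg_ne_zero.mpr one_ne_zero))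
      (by linear_combination hdiag)
  linear_combination -hcancel / 2

end LeibnizTable

section DerivPairing

variable {ι : Type*} [Fintype ι]

noncomputable def derivPairing (S : Matrix ι ι ℝ) (P : ℝ → ι → ℝ) (j k : ℕ) (t : ℝ) : ℝ :=
  (fun a => iteratedDeriv j (fun s => P s a) t) ⬝ᵥ
    (S *ᵥ fun a => iteratedDeriv k (fun s => P s a) t)

theorem derivPairing_zero_left (S : Matrix ι ι ℝ) (P : ℝ → ι → ℝ) (k : ℕ) (t : ℝ) :
    derivPairing S P 0 k t = P t ⬝ᵥ (S *ᵥ fun a => iteratedDeriv k (fun s => P s a) t) := by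
  simp [derivPairing]

theorem derivPairing_comm {S : Matrix ι ι ℝ} {c : ℝ} (hS : Sᵀ = c • S) (P : ℝ → ι → ℝ)
    (j k : ℕ) (t : ℝ) : derivPairing S P j k t = c * derivPairing S P k j t := by
  rw [derivPairing, derivPairing, dotProduct_mulVec, dotProduct_comm, ← mulVec_transpose, hS,
    smul_mulVec, dotProduct_smul, smul_eq_mul]

theorem hasDerivAt_derivPairing (S : Matrix ι ι ℝ) {P : ℝ → ι → ℝ} {n : WithTop ℕ∞} {t : ℝ}
    (hP : ∀ a, ContDiffAt ℝ n (fun s => P s a) t) {j k : ℕ} (hj : (j : WithTop ℕ∞) < n)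
    (hk : (k : WithTop ℕ∞) < n) :
    HasDerivAt (derivPairing S P j k)
      (derivPairing S P (j + 1) k t + derivPairing S P j (k + 1) t) t := by
  have hsum : HasDerivAt (derivPairing S P j k) _ t := HasDerivAt.fun_sum fun a (_ : a ∈ Finset.univ) =>
    ((hP a).hasDerivAt_iteratedDeriv hj).fun_mul <| HasDerivAt.fun_sum fun c (_ : c ∈ Finset.univ) =>
      ((hP c).hasDerivAt_iteratedDeriv hk).const_mul (S a c)
  convert hsum using 1
  simp only [derivPairing, dotProduct, mulVec, Finset.sum_add_distrib]

theorem sum_mul_derivPairing_eq_zero (S : Matrix ι ι ℝ) {P : ℝ → ι → ℝ} {s : Finset ℕ}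
    {b : ℕ → ℝ} {t : ℝ} (hODE : ∀ a, ∑ i ∈ s, b i * iteratedDeriv i (fun u => P u a) t = 0)
    (j : ℕ) : ∑ i ∈ s, b i * derivPairing S P j i t = 0 := by
  have hzero : ∑ i ∈ s, b i • (fun a => iteratedDeriv i (fun u => P u a) t) = 0 := by
    ext a
    simpa using hODE a
  calc ∑ i ∈ s, b i * derivPairing S P j i t
      = (fun a => iteratedDeriv j (fun u => P u a) t) ⬝ᵥ
          (S *ᵥ ∑ i ∈ s, b i • fun a => iteratedDeriv i (fun u => P u a) t) := by
        simp only [derivPairing, mulVec_sum, dotProduct_sum, mulVec_smul, dotProduct_smul,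
          smul_eq_mul]
    _ = 0 := by rw [hzero, mulVec_zero, dotProduct_zero]

end DerivPairing

/-- Yukawa coupling ODE from Griffiths transversality. Let `Π : I → ℝ^m` be sufficiently
differentiable, `S` an `m×m` real matrix with `Sᵀ = (−1)^{l+1} S` (`l ≥ 1`), and suppose
`Π(t)ᵀ S Π^{(j)}(t) = 0` for `0 ≤ j ≤ l−2` on the open set `I`. Let
`C(t) = Π(t)ᵀ S Π^{(l−1)}(t)` and suppose `∑_{i=0}^{l} b_i(t) Π^{(i)}(t) = 0`
componentwise on `I`. Then (a) `Π(t)ᵀ S Π^{(l)}(t) = (l/2)·C'(t)`, and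
(b) `b_{l−1}(t) C(t) + (l/2) b_l(t) C'(t) = 0` on `I`. -/
theorem yukawa_coupling_ODE
    (m l : ℕ) (hl : 1 ≤ l) (I : Set ℝ) (hI : IsOpen I)
    (P : ℝ → Fin m → ℝ) (S : Matrix (Fin m) (Fin m) ℝ)
    (hS : Sᵀ = (-1 : ℝ) ^ (l + 1) • S)
    (hsmooth : ∀ a, ContDiffOn ℝ (l + 1) (fun t => P t a) I)
    (hvanish : ∀ t ∈ I, ∀ j : ℕ, j + 2 ≤ l →
      dotProduct (P t) (S.mulVec fun b => iteratedDeriv j (fun s => P s b) t) = 0)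
    (b : ℕ → ℝ → ℝ)
    (hODE : ∀ t ∈ I, ∀ a,
      ∑ i ∈ Finset.range (l + 1), b i t * iteratedDeriv i (fun s => P s a) t = 0)
    (C : ℝ → ℝ)
    (hC : ∀ t, C t
      = dotProduct (P t) (S.mulVec fun b => iteratedDeriv (l - 1) (fun s => P s b) t)) :
    (∀ t ∈ I,
      dotProduct (P t) (S.mulVec fun b => iteratedDeriv l (fun s => P s b) t)
        = ((l : ℝ) / 2) * deriv C t) ∧
    (∀ t ∈ I, b (l - 1) t * C t + ((l : ℝ) / 2) * b l t * deriv C t = 0) := by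
  obtain ⟨n, rfl⟩ : ∃ n, l = n + 1 := ⟨l - 1, by omega⟩
  have hCQ : C = derivPairing S P 0 n := funext fun t => by simp [hC, derivPairing_zero_left]
  have hQ : IsLeibnizTableOn (derivPairing S P) n I := fun j k hjk t ht =>
    hasDerivAt_derivPairing S (fun a => (hsmooth a).contDiffAt (hI.mem_nhds ht))
      (by norm_cast; omega) (by norm_cast; omega)
  have h0 : ∀ k < n, Set.EqOn (derivPairing S P 0 k) 0 I := fun k hk t ht => by
    simpa [derivPairing_zero_left] using hvanish t ht k (by omega)
  have hA : ∀ t ∈ I, derivPairing S P 0 (n + 1) t = ((n + 1 : ℝ) / 2) * deriv C t :=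
    hCQ ▸ hQ.eqOn_zero_succ hI h0 fun t _ => derivPairing_comm hS P (n + 1) 0 t
  refine ⟨fun t ht => ?_, fun t ht => ?_⟩
  · rw [← derivPairing_zero_left, hA t ht]
    push_cast
    ring
  · have hsum := sum_mul_derivPairing_eq_zero S (hODE t ht) 0
    rw [Finset.sum_range_succ, Finset.sum_range_succ, Finset.sum_eq_zero fun i hi =>
      by rw [h0 i (Finset.mem_range.mp hi) ht, Pi.zero_apply, mul_zero], hA t ht, ← hCQ] at hsum
    push_cast
    linear_combination hsum
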